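/- For κ > 0, a ≥ 0, k > 0, and q ∈ ℝ, the Fourier transform of the Debye–Hückel screening cloud evaluates exactly: −(qκ² e^{κa}/(2(1+κa))) ∫_a^∞ ∫_{-1}^1 r e^{-κr} cos(krz) dz dr = −(q/(1+κa))·[(κ/k) sin(ka) + cos(ka)]/(1 + k²/κ²). -/

import Mathlib

/-!
The `z`-integral equals `2 sin (k r) / (k r)`, so the factor `r` cancels and what remains is
`∫_a^∞ e^{-κr} sin (k r) dr`, the imaginary part of `∫_a^∞ e^{(-κ + i k) r} dr = e^{(-κ + i k) a} / (κ - i k)`.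
-/

open Real MeasureTheory Set

theorem integral_exp_neg_mul_mul_sin_Ioi {κ : ℝ} (hκ : 0 < κ) (k a : ℝ) :
    ∫ r in Ioi a, exp (-(κ * r)) * sin (k * r)
      = exp (-(κ * a)) * (κ * sin (k * a) + k * cos (k * a)) / (κ ^ 2 + k ^ 2) := by
  set w : ℂ := -κ + k * Complex.I
  have hw : w.re < 0 := by simpa [w] using hκ
  have h_im (r : ℝ) : exp (-(κ * r)) * sin (k * r) = (Complex.exp (w * r)).im := by
    simp [w, Complex.exp_im]
  simp_rw [h_im, ← RCLike.im_to_complex]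
  rw [integral_im (integrableOn_exp_mul_complex_Ioi hw a), integral_exp_mul_complex_Ioi hw a]
  simp [w, Complex.div_im, Complex.exp_re, Complex.exp_im, Complex.normSq]
  field_simp
  ring

theorem integral_cos_mul_neg_one_one {c : ℝ} (hc : c ≠ 0) :
    ∫ z in (-1 : ℝ)..1, cos (c * z) = 2 * sin c / c := by
  rw [intervalIntegral.integral_comp_mul_left cos hc, integral_cos, smul_eq_mul]
  simp only [mul_one, mul_neg, sin_neg]
  field_simp
  ring

theorem mul_integral_cos_mul_mul_neg_one_one {k : ℝ} (hk : k ≠ 0) (r : ℝ) :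
    r * ∫ z in (-1 : ℝ)..1, cos (k * r * z) = 2 * sin (k * r) / k := by
  rcases eq_or_ne r 0 with rfl | hr
  · simp
  rw [integral_cos_mul_neg_one_one (mul_ne_zero hk hr)]
  field_simp

theorem dh_fourier_transform_general (κ a k q : ℝ) (hκ : 0 < κ) (hk : 0 < k) :
    -(q * κ ^ 2 * Real.exp (κ * a) / (2 * (1 + κ * a)))
        * ∫ r in Set.Ioi a, ∫ z in (-1 : ℝ)..1, r * Real.exp (-(κ * r)) * Real.cos (k * r * z)
      = -(q / (1 + κ * a)) * ((κ / k) * Real.sin (k * a) + Real.cos (k * a))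
          / (1 + k ^ 2 / κ ^ 2) := by
  have inner (r : ℝ) : ∫ z in (-1 : ℝ)..1, r * exp (-(κ * r)) * cos (k * r * z)
      = 2 / k * (exp (-(κ * r)) * sin (k * r)) := by
    rw [intervalIntegral.integral_const_mul, mul_right_comm,
      mul_integral_cos_mul_mul_neg_one_one hk.ne']
    ring
  simp_rw [inner]
  rw [integral_const_mul, integral_exp_neg_mul_mul_sin_Ioi hκ, exp_neg]
  field_simp

/-- exact evaluation of the Fourier transform of the Debye–Hückel
screening cloud: for `κ > 0`, `a ≥ 0`, `k > 0`, `q ∈ ℝ`,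
`−(qκ² e^{κa}/(2(1+κa))) ∫_a^∞ ∫_{-1}^1 r e^{-κr} cos(krz) dz dr
  = −(q/(1+κa))·[(κ/k) sin(ka) + cos(ka)]/(1 + k²/κ²)`. -/
theorem dh_fourier_transform (κ a k q : ℝ) (hκ : 0 < κ) (ha : 0 ≤ a) (hk : 0 < k) :
    -(q * κ ^ 2 * Real.exp (κ * a) / (2 * (1 + κ * a)))
        * ∫ r in Set.Ioi a, ∫ z in (-1 : ℝ)..1, r * Real.exp (-(κ * r)) * Real.cos (k * r * z)
      = -(q / (1 + κ * a)) * ((κ / k) * Real.sin (k * a) + Real.cos (k * a))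
          / (1 + k ^ 2 / κ ^ 2) :=
  dh_fourier_transform_general κ a k q hκ hk
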